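/- arXiv:1207.2836 — 3 statements merged into one kernel-verified Lean document; each statement's English description precedes it below -/
import Mathlib

section
/- Let h : X × X* → ℝ ∪ {±∞} satisfy (Jh)(x,x*) ≥ ⟨x,x*⟩ for all (x,x*) ∈ X × X*. Then P₁(D(Jh)) = P₂(D(h*) ∩ (X* × X)) and this set is contained in the norm closure in X of the convex hull of P₁(D(h)). -/
open NormedSpace Classical

noncomputable section

/-- effective domain of an extended-real-valued function -/
def edom {E : Type*} (f : E → EReal) : Set E := {x | f x < ⊤}

/-- indicator function (0 on the set, +∞ off it) -/
def indic {E : Type*} (C : Set E) : E → EReal := fun x => if x ∈ C then 0 else ⊤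

/-- convexity for EReal-valued functions -/
def ErConvex {E : Type*} [AddCommGroup E] [Module ℝ E] (f : E → EReal) : Prop :=
  ∀ x y : E, ∀ a b : ℝ, 0 ≤ a → 0 ≤ b → a + b = 1 →
    f (a • x + b • y) ≤ (a : EReal) * f x + (b : EReal) * f y

/-- recession cone of a set -/
def recc {E : Type*} [AddCommGroup E] [Module ℝ E] (C : Set E) : Set E :=
  {u | ∀ z ∈ C, ∀ t : ℝ, 0 ≤ t → z + t • u ∈ C}

variable (X : Type*) [NormedAddCommGroup X] [NormedSpace ℝ X]

/-- Fenchel conjugate of f : X → EReal, defined on the dual -/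
def conj1 (f : X → EReal) : StrongDual ℝ X → EReal :=
  fun p => ⨆ x : X, ((p x : EReal) - f x)

/-- Fenchel conjugate of h : X × X* → EReal, defined on X* × X** via
⟨(x,x*),(y*,y**)⟩ = ⟨x,y*⟩ + ⟨y**,x*⟩ -/
def conj2 (h : X × StrongDual ℝ X → EReal) : StrongDual ℝ X × StrongDual ℝ (StrongDual ℝ X) → EReal :=
  fun p => ⨆ z : X × StrongDual ℝ X, (((p.1 z.1 + p.2 z.2 : ℝ) : EReal) - h z)

/-- The J operation: (Jh)(x,x*) = h*(x*, x), with X canonically embedded in X** -/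
def Jop (h : X × StrongDual ℝ X → EReal) : X × StrongDual ℝ X → EReal :=
  fun z => conj2 X h (z.2, inclusionInDoubleDual ℝ X z.1)

/-- the duality product as an EReal-valued function on X × X* -/
def pairE : X × StrongDual ℝ X → EReal := fun z => ((z.2 z.1 : ℝ) : EReal)

/-- weak-* closure of a subset of the dual -/
def wcl (S : Set (StrongDual ℝ X)) : Set (StrongDual ℝ X) :=
  StrongDual.toWeakDual ⁻¹' closure (StrongDual.toWeakDual '' S)

/-- monotone subset of X × X* -/
def MonotoneSet (T : Set (X × StrongDual ℝ X)) : Prop :=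
  ∀ p ∈ T, ∀ q ∈ T, 0 ≤ (p.2 - q.2) (p.1 - q.1)

/-- maximal monotone subset of X × X* -/
def MaxMonotone (T : Set (X × StrongDual ℝ X)) : Prop :=
  MonotoneSet X T ∧ ∀ S : Set (X × StrongDual ℝ X), MonotoneSet X S → T ⊆ S → S = T

/-- the Fitzpatrick family of a maximal monotone operator: closed convex functions
majorizing the duality product and coinciding with it on T -/
def FitzFamily (T : Set (X × StrongDual ℝ X)) : Set ((X × StrongDual ℝ X) → EReal) :=
  {h | ErConvex h ∧ LowerSemicontinuous h ∧ (∀ z, pairE X z ≤ h z) ∧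
       ∀ z ∈ T, h z = pairE X z}

/-- lower semicontinuity with respect to the strong × weak-* topology on X × X* -/
def lscSW (h : X × StrongDual ℝ X → EReal) : Prop :=
  LowerSemicontinuous (fun p : X × WeakDual ℝ X => h (p.1, StrongDual.toWeakDual.symm p.2))

end

/-!
If `x₀ ∈ P₁(D(Jh))` lay outside the closed convex set `C = cl conv P₁(D(h))`, a functional `φ`
would separate it: `φ ≤ c` on `C` and `φ x₀ > c`. Moving along `x* + t φ` raises `Jh(x₀, ·)` by at
most `t c`, whereas the duality product `⟨x₀, x* + t φ⟩` grows like `t φ x₀`, so `Jh ≥ ⟨·,·⟩`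
fails for large `t`.
-/

section Fitzpatrick

variable {X : Type*} [NormedAddCommGroup X] [NormedSpace ℝ X]

theorem fst_image_edom_Jop (h : X × StrongDual ℝ X → EReal) :
    Prod.fst '' edom (Jop X h) =
      {x : X | ∃ y : StrongDual ℝ X, (y, inclusionInDoubleDual ℝ X x) ∈ edom (conj2 X h)} := by
  ext x
  constructor
  · rintro ⟨z, hz, rfl⟩
    exact ⟨z.2, hz⟩
  · rintro ⟨y, hy⟩
    exact ⟨(x, y), hy, rfl⟩

theorem Jop_add_smul_le {h : X × StrongDual ℝ X → EReal} {φ : StrongDual ℝ X} {c t : ℝ}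
    (hφ : ∀ z ∈ edom h, φ z.1 ≤ c) (ht : 0 ≤ t) (x : X) (xs : StrongDual ℝ X) :
    Jop X h (x, xs + t • φ) ≤ Jop X h (x, xs) + ((t * c : ℝ) : EReal) := by
  refine iSup_le fun z => ?_
  by_cases hz : z ∈ edom h
  · have hle : xs z.1 + t * φ z.1 + z.2 x ≤ xs z.1 + z.2 x + t * c := by
      have := mul_le_mul_of_nonneg_left (hφ z hz) ht
      linarith
    have hterm : ((xs z.1 + z.2 x : ℝ) : EReal) - h z ≤ Jop X h (x, xs) :=
      le_iSup (fun w : X × StrongDual ℝ X =>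
        ((xs w.1 + (inclusionInDoubleDual ℝ X x) w.2 : ℝ) : EReal) - h w) z
    calc (((xs + t • φ) z.1 + (inclusionInDoubleDual ℝ X x) z.2 : ℝ) : EReal) - h z
        ≤ ((xs z.1 + z.2 x + t * c : ℝ) : EReal) - h z :=
          EReal.sub_le_sub (EReal.coe_le_coe_iff.mpr (by simpa using hle)) le_rfl
      _ = ((xs z.1 + z.2 x : ℝ) : EReal) - h z + ((t * c : ℝ) : EReal) := by
          rw [EReal.coe_add, sub_eq_add_neg, sub_eq_add_neg, add_right_comm]
      _ ≤ Jop X h (x, xs) + ((t * c : ℝ) : EReal) := by gcongr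
  · rw [show h z = ⊤ from not_lt_top_iff.mp hz, EReal.sub_top]
    exact bot_le

theorem EReal.le_of_forall_coe_add_mul_le {K : EReal} (hK : K ≠ ⊤) {a b c : ℝ}
    (hle : ∀ t : ℝ, 0 ≤ t → ((a + t * b : ℝ) : EReal) ≤ K + ((t * c : ℝ) : EReal)) : b ≤ c := by
  have hK₀ : K ≠ ⊥ := by
    intro hbot
    simpa [hbot] using hle 0 le_rfl
  lift K to ℝ using ⟨hK, hK₀⟩
  have hreal (t : ℝ) (ht : 0 ≤ t) : a + t * b ≤ K + t * c := by exact_mod_cast hle t ht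
  by_contra! hcb
  have hpos : 0 < b - c := _root_.sub_pos.mpr hcb
  have ha : a ≤ K := by simpa using hreal 0 le_rfl
  have := hreal ((K - a + 1) / (b - c)) (_root_.div_nonneg (by linarith) hpos.le)
  have hmul : (K - a + 1) / (b - c) * (b - c) = K - a + 1 := div_mul_cancel₀ _ hpos.ne'
  nlinarith

theorem apply_fst_le_of_mem_edom_Jop {h : X × StrongDual ℝ X → EReal}
    (hJ : ∀ z, pairE X z ≤ Jop X h z) {φ : StrongDual ℝ X} {c : ℝ}
    (hφ : ∀ z ∈ edom h, φ z.1 ≤ c) {z : X × StrongDual ℝ X} (hz : z ∈ edom (Jop X h)) :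
    φ z.1 ≤ c := by
  refine EReal.le_of_forall_coe_add_mul_le (a := z.2 z.1) hz.ne fun t ht => ?_
  calc ((z.2 z.1 + t * φ z.1 : ℝ) : EReal) = pairE X (z.1, z.2 + t • φ) := by simp [pairE]
    _ ≤ Jop X h (z.1, z.2 + t • φ) := hJ _
    _ ≤ Jop X h z + ((t * c : ℝ) : EReal) := Jop_add_smul_le hφ ht z.1 z.2

end Fitzpatrick

theorem statement3_general (X : Type*) [NormedAddCommGroup X] [NormedSpace ℝ X]
    (h : X × StrongDual ℝ X → EReal) (hJ : ∀ z, pairE X z ≤ Jop X h z) :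
    Prod.fst '' edom (Jop X h) =
      {x : X | ∃ y : StrongDual ℝ X, (y, inclusionInDoubleDual ℝ X x) ∈ edom (conj2 X h)} ∧
    Prod.fst '' edom (Jop X h) ⊆ closure (convexHull ℝ (Prod.fst '' edom h)) := by
  refine ⟨fst_image_edom_Jop h, ?_⟩
  rintro _ ⟨z, hz, rfl⟩
  by_contra hzC
  obtain ⟨φ, c, hφC, hcz⟩ :=
    geometric_hahn_banach_closed_point (convex_convexHull ℝ _).closure isClosed_closure hzC
  have hφ : ∀ w ∈ edom h, φ w.1 ≤ c := fun w hw =>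
    (hφC w.1 (subset_closure (subset_convexHull ℝ _ ⟨w, hw, rfl⟩))).le
  exact (apply_fst_le_of_mem_edom_Jop hJ hφ hz).not_gt hcz

theorem statement3 (X : Type*) [NormedAddCommGroup X] [NormedSpace ℝ X] [CompleteSpace X]
    (h : X × StrongDual ℝ X → EReal) (hJ : ∀ z, pairE X z ≤ Jop X h z) :
    Prod.fst '' edom (Jop X h) =
      {x : X | ∃ y : StrongDual ℝ X, (y, inclusionInDoubleDual ℝ X x) ∈ edom (conj2 X h)} ∧
    Prod.fst '' edom (Jop X h) ⊆ closure (convexHull ℝ (Prod.fst '' edom h)) :=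
  statement3_general X h hJ
end

section
/- Let h : X × X* → ℝ ∪ {+∞} be a proper, closed (norm-lower-semicontinuous) convex function and 0 ≤ L < ∞. If P₂(D(h*)) ⊆ B_{X**}[L], then h(x, x*) ≤ h(x, z*) + L‖x* − z*‖ for all x ∈ X and all x*, z* ∈ X*, and consequently D(h) = P₁(D(h)) × X*. -/
open NormedSpace Classical

/-!
Separating points below the epigraph by Hahn–Banach in `X × X* × ℝ` shows that the proper closed
convex `h` is the supremum of its continuous affine minorants
`(x, x*) ↦ ⟨x, y*⟩ + ⟨y**, x*⟩ - α`. Each such minorant has `h*(y*, y**) ≤ α < ∞`, so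
`‖y**‖ ≤ L` and the minorant is `L`-Lipschitz in `x*`; the supremum `h` inherits this bound.
-/

lemma EReal.coe_le_of_forall_le_coe {a : ℝ} {x : EReal} (h : ∀ r : ℝ, x ≤ r → a ≤ r) :
    (a : EReal) ≤ x := by
  by_contra! hlt
  obtain ⟨r, hxr, hra⟩ := EReal.lt_iff_exists_real_btwn.mp hlt
  exact (EReal.coe_lt_coe_iff.mp hra).not_ge (h r hxr.le)

lemma StrongDual.apply_prod_real {E : Type*} [NormedAddCommGroup E] [NormedSpace ℝ E]
    (φ : StrongDual ℝ (E × ℝ)) (w : E) (r : ℝ) :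
    φ (w, r) = φ.comp (.inl ℝ E ℝ) w + φ (0, 1) * r := by
  rw [← φ.comp_inl_add_comp_inr, mul_comm, ← smul_eq_mul, ← map_smul]
  simp

def realEpigraph {E : Type*} (f : E → EReal) : Set (E × ℝ) := {q | f q.1 ≤ q.2}

lemma LowerSemicontinuous.isClosed_realEpigraph {E : Type*} [TopologicalSpace E] {f : E → EReal}
    (hf : LowerSemicontinuous f) : IsClosed (realEpigraph f) :=
  hf.isClosed_epigraph.preimage
    (continuous_fst.prodMk (continuous_coe_real_ereal.comp continuous_snd))

lemma ErConvex.convex_realEpigraph {E : Type*} [AddCommGroup E] [Module ℝ E] {f : E → EReal}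
    (hf : ErConvex f) : Convex ℝ (realEpigraph f) := by
  rintro ⟨x, r⟩ (hx : f x ≤ r) ⟨y, s⟩ (hy : f y ≤ s) a b ha hb hab
  show f (a • x + b • y) ≤ ((a * r + b * s : ℝ) : EReal)
  calc f (a • x + b • y) ≤ a * f x + b * f y := hf x y a b ha hb hab
    _ ≤ a * r + b * s := by gcongr
    _ = ((a * r + b * s : ℝ) : EReal) := by norm_cast

section AffineMinorant

variable {E : Type*} [NormedAddCommGroup E] [NormedSpace ℝ E]

def IsAffineMinorant (f : E → EReal) (p : StrongDual ℝ E) (α : ℝ) : Prop :=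
  ∀ w, ((p w - α : ℝ) : EReal) ≤ f w

variable {f : E → EReal}

lemma exists_separation_of_lt (hlsc : LowerSemicontinuous f) (hconv : ErConvex f) {z : E} {t : ℝ}
    (ht : (t : EReal) < f z) :
    ∃ (g : StrongDual ℝ E) (s u : ℝ), g z + s * t < u ∧
      ∀ w (r : ℝ), f w ≤ r → u < g w + s * r := by
  obtain ⟨φ, u, hzt, hepi⟩ := geometric_hahn_banach_point_closed hconv.convex_realEpigraph
    hlsc.isClosed_realEpigraph (x := (z, t)) ht.not_ge
  refine ⟨φ.comp (.inl ℝ E ℝ), φ (0, 1), u, ?_, fun w r hwr => ?_⟩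
  · rwa [← φ.apply_prod_real]
  · rw [← φ.apply_prod_real]
    exact hepi (w, r) hwr

lemma nonneg_of_separation {z₀ : E} (hz₀ : f z₀ ≠ ⊤) {g : StrongDual ℝ E} {s u : ℝ}
    (hepi : ∀ w (r : ℝ), f w ≤ r → u < g w + s * r) : 0 ≤ s := by
  by_contra! hs
  set r := max (f z₀).toReal ((u - g z₀) / s)
  have hsr : s * r ≤ u - g z₀ := by
    rw [mul_comm, ← div_le_iff_of_neg hs]
    exact le_max_right _ _
  have := hepi z₀ r ((EReal.le_coe_toReal hz₀).trans (by exact_mod_cast le_max_left _ _))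
  linarith

lemma exists_isAffineMinorant_lt_of_separation {z : E} {t : ℝ} {g : StrongDual ℝ E} {s u : ℝ}
    (hs : 0 < s) (hzt : g z + s * t < u) (hepi : ∀ w (r : ℝ), f w ≤ r → u < g w + s * r) :
    ∃ p α, IsAffineMinorant f p α ∧ t < p z - α := by
  have hval : ∀ w, (-s⁻¹ • g) w - -(u / s) = (u - g w) / s := fun w => by
    simp only [smul_apply, smul_eq_mul]
    field_simp
    ring
  refine ⟨-s⁻¹ • g, -(u / s), fun w => EReal.coe_le_of_forall_le_coe fun r hr => ?_, ?_⟩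
  · rw [hval, div_le_iff₀ hs]
    linarith [hepi w r hr]
  · rw [hval, lt_div_iff₀ hs]
    linarith

lemma exists_isAffineMinorant_lt_of_ne_top (hlsc : LowerSemicontinuous f) (hconv : ErConvex f)
    {z : E} (hz : f z ≠ ⊤) {t : ℝ} (ht : (t : EReal) < f z) :
    ∃ p α, IsAffineMinorant f p α ∧ t < p z - α := by
  obtain ⟨g, s, u, hzt, hepi⟩ := exists_separation_of_lt hlsc hconv ht
  have hfz : f z = (f z).toReal := (EReal.coe_toReal hz ht.ne_bot).symm
  have hlt : t < (f z).toReal := by rw [hfz] at ht; exact_mod_cast ht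
  have hs : 0 < s := by
    have := hepi z _ hfz.le
    nlinarith
  exact exists_isAffineMinorant_lt_of_separation hs hzt hepi

lemma IsAffineMinorant.sub_smul {q : StrongDual ℝ E} {β : ℝ} (hq : IsAffineMinorant f q β)
    {g : StrongDual ℝ E} {u : ℝ} (hepi : ∀ w (r : ℝ), f w ≤ r → u < g w) {c : ℝ} (hc : 0 ≤ c) :
    IsAffineMinorant f (q - c • g) (β - c * u) := fun w =>
  EReal.coe_le_of_forall_le_coe fun r hr => by
    have hqr : q w - β ≤ r := EReal.coe_le_coe_iff.mp ((hq w).trans hr)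
    have := hepi w r hr
    simp only [sub_apply, smul_apply, smul_eq_mul]
    nlinarith

theorem exists_isAffineMinorant_lt (hbot : ∀ z, f z ≠ ⊥) (htop : ∃ z, f z ≠ ⊤)
    (hlsc : LowerSemicontinuous f) (hconv : ErConvex f) {z : E} {t : ℝ} (ht : (t : EReal) < f z) :
    ∃ p α, IsAffineMinorant f p α ∧ t < p z - α := by
  obtain ⟨g, s, u, hzt, hepi⟩ := exists_separation_of_lt hlsc hconv ht
  obtain ⟨z₀, hz₀⟩ := htop
  rcases (nonneg_of_separation hz₀ hepi).lt_or_eq with hs | rfl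
  · exact exists_isAffineMinorant_lt_of_separation hs hzt hepi
  -- A vertical hyperplane separates `(z, t)`: tilt an affine minorant, found at `z₀`, along it.
  obtain ⟨q, β, hq, -⟩ := exists_isAffineMinorant_lt_of_ne_top hlsc hconv hz₀
    (t := (f z₀).toReal - 1) (by
      rw [← EReal.coe_toReal hz₀ (hbot z₀)]
      exact_mod_cast sub_one_lt _)
  simp only [zero_mul, add_zero] at hzt hepi
  obtain ⟨n, hn⟩ := exists_nat_gt ((t - (q z - β)) / (u - g z))
  rw [div_lt_iff₀ (by linarith)] at hn
  refine ⟨q - (n : ℝ) • g, β - n * u, hq.sub_smul hepi n.cast_nonneg, ?_⟩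
  simp only [sub_apply, smul_apply, smul_eq_mul]
  linarith

theorem le_add_of_forall_isAffineMinorant (hbot : ∀ z, f z ≠ ⊥) (htop : ∃ z, f z ≠ ⊤)
    (hlsc : LowerSemicontinuous f) (hconv : ErConvex f) {z w : E} {c : ℝ}
    (hc : ∀ p α, IsAffineMinorant f p α → p (z - w) ≤ c) : f z ≤ f w + c := by
  by_contra! hlt
  have hw : f w ≠ ⊤ := fun hw => by simp [hw] at hlt
  rw [← EReal.coe_toReal hw (hbot w), ← EReal.coe_add] at hlt
  obtain ⟨p, α, hp, hpz⟩ := exists_isAffineMinorant_lt hbot htop hlsc hconv hlt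
  have hpw : p w - α ≤ (f w).toReal := by
    rw [← EReal.coe_le_coe_iff, EReal.coe_toReal hw (hbot w)]
    exact hp w
  have := hc p α hp
  rw [map_sub] at this
  linarith

end AffineMinorant

lemma IsAffineMinorant.conj2_le {X : Type*} [NormedAddCommGroup X] [NormedSpace ℝ X]
    {h : X × StrongDual ℝ X → EReal} {p : StrongDual ℝ (X × StrongDual ℝ X)} {α : ℝ}
    (hp : IsAffineMinorant h p α) :
    conj2 X h (p.comp (.inl ℝ _ _), p.comp (.inr ℝ _ _)) ≤ α :=
  iSup_le fun w => by
    rw [p.comp_inl_add_comp_inr]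
    calc ((p w : ℝ) : EReal) - h w ≤ ((p w : ℝ) : EReal) - ((p w - α : ℝ) : EReal) :=
          EReal.sub_le_sub le_rfl (hp w)
      _ = α := by rw [← EReal.coe_sub, sub_sub_cancel]

theorem statement8_general (X : Type*) [NormedAddCommGroup X] [NormedSpace ℝ X]
    (h : X × StrongDual ℝ X → EReal) (hne_bot : ∀ z, h z ≠ ⊥) (hne_top : ∃ z, h z ≠ ⊤)
    (hlsc : LowerSemicontinuous h) (hconv : ErConvex h) (L : ℝ)
    (hdom : Prod.snd '' edom (conj2 X h) ⊆ Metric.closedBall 0 L) :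
    (∀ (x : X) (xs zs : StrongDual ℝ X), h (x, xs) ≤ h (x, zs) + ((L * ‖xs - zs‖ : ℝ) : EReal)) ∧
    edom h = (Prod.fst '' edom h) ×ˢ (Set.univ : Set (StrongDual ℝ X)) := by
  have lip : ∀ (x : X) (xs zs : StrongDual ℝ X),
      h (x, xs) ≤ h (x, zs) + ((L * ‖xs - zs‖ : ℝ) : EReal) := fun x xs zs =>
    le_add_of_forall_isAffineMinorant hne_bot hne_top hlsc hconv fun p α hp => by
      set p₂ := p.comp (.inr ℝ X (StrongDual ℝ X))
      have hp₂ : ‖p₂‖ ≤ L := (dist_zero_right p₂).symm.trans_le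
        (hdom ⟨_, hp.conj2_le.trans_lt (EReal.coe_lt_top α), rfl⟩)
      calc p ((x, xs) - (x, zs)) = p₂ (xs - zs) := by simp [p₂]
        _ ≤ ‖p₂‖ * ‖xs - zs‖ := (le_abs_self _).trans (p₂.le_opNorm _)
        _ ≤ L * ‖xs - zs‖ := by gcongr
  refine ⟨lip, Set.ext fun ⟨x, xs⟩ => ⟨fun hx => ⟨⟨(x, xs), hx, rfl⟩, trivial⟩, ?_⟩⟩
  rintro ⟨⟨⟨x, zs⟩, hzs, rfl⟩, -⟩
  exact (lip x xs zs).trans_lt (EReal.add_lt_top (ne_of_lt hzs) (EReal.coe_ne_top _))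

theorem statement8 (X : Type*) [NormedAddCommGroup X] [NormedSpace ℝ X] [CompleteSpace X]
    (h : X × StrongDual ℝ X → EReal) (hne_bot : ∀ z, h z ≠ ⊥) (hne_top : ∃ z, h z ≠ ⊤)
    (hlsc : LowerSemicontinuous h) (hconv : ErConvex h) (L : ℝ) (hL : 0 ≤ L)
    (hdom : Prod.snd '' edom (conj2 X h) ⊆ Metric.closedBall 0 L) :
    (∀ (x : X) (xs zs : StrongDual ℝ X), h (x, xs) ≤ h (x, zs) + ((L * ‖xs - zs‖ : ℝ) : EReal)) ∧
    edom h = (Prod.fst '' edom h) ×ˢ (Set.univ : Set (StrongDual ℝ X)) :=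
  statement8_general X h hne_bot hne_top hlsc hconv L hdom
end

section
/- If T : X ⇉ X* is a maximal monotone operator, then D(J δ_T) ⊆ {(x,x*) ∈ X × X* : ⟨x,x*⟩ ≤ 0}; that is, whenever the support function of T evaluated at (x*,x), namely sup_{(y,y*) ∈ T} (⟨y,x*⟩ + ⟨x,y*⟩), is finite, one has ⟨x,x*⟩ ≤ 0. -/
open NormedSpace Classical

/-
If ⟨x, x*⟩ > 0 while the support function σ(y, y*) = ⟨y, x*⟩ + ⟨x, y*⟩ of T is bounded above
by M, follow the ray p₀ + t (x, x*) from a point p₀ ∈ T. Against any q ∈ T the monotonicity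
expression grows like t² ⟨x, x*⟩ + t (σ(p₀) - M), so for large t the point is monotonically
related to T and hence, by maximality, lies in T. But σ grows like 2 t ⟨x, x*⟩ along the ray,
contradicting σ ≤ M on T.
-/

section MonotoneRay

variable {X : Type*} [NormedAddCommGroup X] [NormedSpace ℝ X]

lemma dual_apply_sub_comm (p q : X × StrongDual ℝ X) :
    (p.2 - q.2) (p.1 - q.1) = (q.2 - p.2) (q.1 - p.1) := by
  simp only [sub_apply, map_sub]
  ring

lemma MaxMonotone.nonempty {T : Set (X × StrongDual ℝ X)} (hT : MaxMonotone X T) :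
    T.Nonempty := by
  rw [Set.nonempty_iff_ne_empty]
  intro hempty
  have hsingleton : MonotoneSet X {((0 : X), (0 : StrongDual ℝ X))} := by
    rintro p rfl q rfl
    simp
  have := hT.2 _ hsingleton (by simp [hempty])
  simp [hempty] at this

lemma MaxMonotone.mem_of_forall_le {T : Set (X × StrongDual ℝ X)} (hT : MaxMonotone X T)
    {p : X × StrongDual ℝ X} (hp : ∀ q ∈ T, 0 ≤ (p.2 - q.2) (p.1 - q.1)) : p ∈ T := by
  have hmono : MonotoneSet X (insert p T) := by
    rintro r (rfl | hr) s (rfl | hs)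
    · simp
    · exact hp s hs
    · rw [dual_apply_sub_comm]
      exact hp r hr
    · exact hT.1 r hr s hs
  rw [← hT.2 _ hmono (Set.subset_insert p T)]
  exact Set.mem_insert p T

lemma le_Jop_indic {T : Set (X × StrongDual ℝ X)} (z : X × StrongDual ℝ X)
    {p : X × StrongDual ℝ X} (hp : p ∈ T) :
    ((z.2 p.1 + p.2 z.1 : ℝ) : EReal) ≤ Jop X (indic T) z := by
  have := le_iSup (fun w : X × StrongDual ℝ X =>
    (((z.2 w.1 + inclusionInDoubleDual ℝ X z.1 w.2 : ℝ) : EReal) - indic T w)) p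
  simpa [Jop, conj2, indic, hp] using this

lemma dual_apply_ray_sub (p₀ q z : X × StrongDual ℝ X) (t : ℝ) :
    ((p₀.2 + t • z.2) - q.2) ((p₀.1 + t • z.1) - q.1) =
      (p₀.2 - q.2) (p₀.1 - q.1)
        + t * ((z.2 p₀.1 + p₀.2 z.1) - (z.2 q.1 + q.2 z.1)) + t ^ 2 * z.2 z.1 := by
  simp only [sub_apply, add_apply, smul_apply, map_sub, map_add, map_smul, smul_eq_mul]
  ring

lemma MonotoneSet.dual_apply_ray_sub_nonneg {T : Set (X × StrongDual ℝ X)}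
    (hT : MonotoneSet X T) {p₀ z : X × StrongDual ℝ X} (hp₀ : p₀ ∈ T) {M t : ℝ}
    (hM : ∀ q ∈ T, z.2 q.1 + q.2 z.1 ≤ M) (ht : 0 ≤ t)
    (hta : M - (z.2 p₀.1 + p₀.2 z.1) ≤ t * z.2 z.1) {q : X × StrongDual ℝ X} (hq : q ∈ T) :
    0 ≤ ((p₀.2 + t • z.2) - q.2) ((p₀.1 + t • z.1) - q.1) := by
  rw [dual_apply_ray_sub]
  have hlin : 0 ≤ t * ((z.2 p₀.1 + p₀.2 z.1) - (z.2 q.1 + q.2 z.1) + t * z.2 z.1) :=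
    mul_nonneg ht (by linarith [hM q hq])
  linarith [hT p₀ hp₀ q hq]

end MonotoneRay

theorem statement16_general (X : Type*) [NormedAddCommGroup X] [NormedSpace ℝ X]
    (T : Set (X × StrongDual ℝ X)) (hT : MaxMonotone X T) :
    edom (Jop X (indic T)) ⊆ {z : X × StrongDual ℝ X | z.2 z.1 ≤ 0} := by
  intro z hz
  show z.2 z.1 ≤ 0
  by_contra! hpos
  obtain ⟨M, hJM, -⟩ := EReal.lt_iff_exists_real_btwn.mp hz
  have hM : ∀ q ∈ T, z.2 q.1 + q.2 z.1 ≤ M := fun q hq =>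
    EReal.coe_le_coe_iff.mp ((le_Jop_indic z hq).trans hJM.le)
  obtain ⟨p₀, hp₀⟩ := hT.nonempty
  set c := z.2 p₀.1 + p₀.2 z.1
  set t := max 1 ((M - c) / z.2 z.1)
  have ht : 1 ≤ t := le_max_left _ _
  have hta : M - c ≤ t * z.2 z.1 :=
    (div_le_iff₀ hpos).mp (le_max_right _ _)
  have hray : (p₀.1 + t • z.1, p₀.2 + t • z.2) ∈ T :=
    hT.mem_of_forall_le fun q hq => hT.1.dual_apply_ray_sub_nonneg hp₀ hM (by linarith) hta hq
  have hσ := hM _ hray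
  simp only [map_add, map_smul, add_apply, smul_apply, smul_eq_mul] at hσ
  linarith [mul_pos (zero_lt_one.trans_le ht) hpos]

theorem statement16 (X : Type*) [NormedAddCommGroup X] [NormedSpace ℝ X] [CompleteSpace X]
    (T : Set (X × StrongDual ℝ X)) (hT : MaxMonotone X T) :
    edom (Jop X (indic T)) ⊆ {z : X × StrongDual ℝ X | z.2 z.1 ≤ 0} :=
  statement16_general X T hT
end
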